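/- arXiv:2305.15120 — 2 statements merged into one kernel-verified Lean document; each statement's English description precedes it below -/
import Mathlib

section
/- Let q ≡ 1 (mod 6) be a prime power and χ a primitive cubic character of genus g over 𝔽_q[T] which is odd. Then for every integer A with 0 ≤ A ≤ g and every s ∈ ℂ, 𝓛(q^{−s}, χ) = ∑_{f∈𝓜_{≤A}} χ(f)/|f|^s + ω(χ) · q^{(1/2 − s)g} · ∑_{f∈𝓜_{≤ g−A−1}} χ̄(f)/|f|^{1−s}. -/
open Polynomial Finset Filter
open scoped Classical

noncomputable section

/-- The monic polynomial `X^n + ∑_{i<n} c i · X^i`; as `c` ranges over `Fin n → Fq`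
this parametrizes the monic polynomials of degree `n` over `Fq`. -/
def monicOf {Fq : Type} [Field Fq] (n : ℕ) (c : Fin n → Fq) : Polynomial Fq :=
  X ^ n + ∑ i : Fin n, C (c i) * X ^ (i : ℕ)

/-- Sum of `φ` over the monic polynomials of degree `n` in `Fq[T]`. -/
def sumMonic {Fq : Type} [Field Fq] [Fintype Fq] (n : ℕ) (φ : Polynomial Fq → ℂ) : ℂ :=
  ∑ c : Fin n → Fq, φ (monicOf n c)

/-- Sum of `φ` over the squarefree monic polynomials of degree `n` in `Fq[T]`. -/
def sumSqfree {Fq : Type} [Field Fq] [Fintype Fq] (n : ℕ) (φ : Polynomial Fq → ℂ) : ℂ :=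
  ∑ c : Fin n → Fq, if Squarefree (monicOf n c) then φ (monicOf n c) else 0

/-- `L(s,χ) = ∑_{F monic} χ(F)|F|^{-s}`, grouped by degree.  For the characters in this
paper the coefficient sums vanish in large degree, so this is a finite sum giving the
analytic continuation of the Dirichlet series. -/
def Lval {Fq : Type} [Field Fq] [Fintype Fq] (q : ℕ) (s : ℝ) (χ : Polynomial Fq → ℂ) : ℂ :=
  ∑' n : ℕ, sumMonic n χ * ((q : ℝ) ^ (-s * (n : ℝ)) : ℝ)

/-- `𝓛(u,χ) = ∑_{F monic} χ(F) u^{deg F}`, grouped by degree. -/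
def Lu {Fq : Type} [Field Fq] [Fintype Fq] (u : ℂ) (χ : Polynomial Fq → ℂ) : ℂ :=
  ∑' n : ℕ, sumMonic n χ * u ^ n

/-- `chi` is the family of cubic residue symbols `chi F = χ_F` on `Fq[T]` determined by the
isomorphism `Ω` from the cube roots of unity of `Fq^*` to `μ₃ ⊂ ℂ^*`. -/
structure IsCubicSymbol (q : ℕ) {Fq : Type} [Field Fq] [Fintype Fq]
    (Ω : Fq → ℂ) (chi : Polynomial Fq → Polynomial Fq → ℂ) : Prop where
  omega_mul : ∀ a b : Fq, a ^ 3 = 1 → b ^ 3 = 1 → Ω (a * b) = Ω a * Ω b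
  omega_cube : ∀ a : Fq, a ^ 3 = 1 → (Ω a) ^ 3 = 1
  omega_inj : ∀ a b : Fq, a ^ 3 = 1 → b ^ 3 = 1 → Ω a = Ω b → a = b
  omega_surj : ∀ z : ℂ, z ^ 3 = 1 → ∃ a : Fq, a ^ 3 = 1 ∧ Ω a = z
  chi_one : ∀ a : Polynomial Fq, chi 1 a = 1
  chi_mul_left : ∀ F G a : Polynomial Fq, F.Monic → G.Monic →
    chi (F * G) a = chi F a * chi G a
  chi_prime_dvd : ∀ P a : Polynomial Fq, P.Monic → Irreducible P → P ∣ a → chi P a = 0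
  chi_prime_not_dvd : ∀ P a : Polynomial Fq, P.Monic → Irreducible P → ¬ P ∣ a →
    ∃ c : Fq, c ^ 3 = 1 ∧ Ω c = chi P a ∧ P ∣ (a ^ ((q ^ P.natDegree - 1) / 3) - C c)

/-- The monic irreducible polynomials over `Fq`. -/
def MonicIrred (Fq : Type) [Field Fq] : Type := {P : Polynomial Fq // P.Monic ∧ Irreducible P}

/-- `|P| = q^{deg P}` as a real number. -/
def normP {Fq : Type} [Field Fq] (q : ℕ) (P : MonicIrred Fq) : ℝ := (q : ℝ) ^ P.1.natDegree

/-- `C_q = ∏_P (1 - 1/(|P|(|P|+1)))`. -/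
def Cq (q : ℕ) (Fq : Type) [Field Fq] : ℝ :=
  ∏' P : MonicIrred Fq, (1 - (normP q P * (normP q P + 1))⁻¹)

/-- `M_q(s) = ζ_q(3s) ∏_P (1 - |P|^{-3s}/(|P|+1))`. -/
def Mq (q : ℕ) (Fq : Type) [Field Fq] (s : ℝ) : ℝ :=
  (1 - (q : ℝ) ^ (1 - 3 * s))⁻¹ *
    ∏' P : MonicIrred Fq, (1 - (normP q P) ^ (-3 * s) * (normP q P + 1)⁻¹)

/-! The series `𝓛(u,χ)` is a polynomial of degree `≤ g`, and comparing
coefficients in the functional equation expresses its coefficient of `u^k` through the coefficient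
of `u^(g-k)` of `𝓛(u,χ̄)`. Keeping the terms of degree `≤ A` and rewriting those of degree `> A`
in this way gives the two sums. -/

section Coefficients

variable {K : Type*} [Field K]

theorem coeff_eq_of_sum_range_eq_of_ne_zero [Infinite K] {N : ℕ} {a a' : ℕ → K}
    (h : ∀ u : K, u ≠ 0 → ∑ n ∈ range N, a n * u ^ n = ∑ n ∈ range N, a' n * u ^ n)
    {k : ℕ} (hk : k < N) : a k = a' k := by
  let P : K[X] := ∑ n ∈ range N, C (a n) * X ^ n
  let P' : K[X] := ∑ n ∈ range N, C (a' n) * X ^ n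
  have hPP' : P = P' := by
    refine eq_of_infinite_eval_eq P P' (Set.Infinite.mono (s := {0}ᶜ) (fun u hu => ?_)
      (Set.finite_singleton 0).infinite_compl)
    simpa [P, P', eval_finsetSum] using h u hu
  simpa [P, P', finsetSum_coeff, coeff_C_mul, coeff_X_pow, hk] using congrArg (coeff · k) hPP'

theorem pow_mul_sum_range_inv_mul_pow {g : ℕ} {r u : K} (hr : r ≠ 0) (hu : u ≠ 0) (b : ℕ → K) :
    u ^ g * ∑ n ∈ range (g + 1), b n * (1 / (r * u)) ^ n =
      ∑ n ∈ range (g + 1), b (g - n) * (r ^ (g - n))⁻¹ * u ^ n := by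
  rw [← sum_range_reflect, mul_sum]
  refine sum_congr rfl fun n hn => ?_
  have hn : n ≤ g := Nat.lt_succ_iff.mp (mem_range.mp hn)
  rw [Nat.add_sub_cancel, ← Nat.sub_add_cancel hn, pow_add, Nat.sub_add_cancel hn, one_div,
    mul_inv, mul_pow, inv_pow, inv_pow]
  field_simp

theorem coeff_eq_of_functional_equation [Infinite K] {g : ℕ} {a b : ℕ → K} {c r : K}
    (hr : r ≠ 0)
    (hFE : ∀ u : K, u ≠ 0 → ∑ n ∈ range (g + 1), a n * u ^ n =
      c * u ^ g * ∑ n ∈ range (g + 1), b n * (1 / (r * u)) ^ n)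
    {k : ℕ} (hk : k ≤ g) : a k = c * b (g - k) * (r ^ (g - k))⁻¹ := by
  refine coeff_eq_of_sum_range_eq_of_ne_zero (a' := fun n => c * b (g - n) * (r ^ (g - n))⁻¹)
    (fun u hu => ?_) (Nat.lt_succ_of_le hk)
  rw [hFE u hu, mul_assoc, pow_mul_sum_range_inv_mul_pow hr hu, mul_sum]
  exact sum_congr rfl fun n _ => by ring

end Coefficients

theorem sum_range_succ_eq_sum_range_add_sum_range_sub {M : Type*} [AddCommMonoid M]
    (f : ℕ → M) {A g : ℕ} (hA : A ≤ g) :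
    ∑ n ∈ range (g + 1), f n = ∑ n ∈ range (A + 1), f n + ∑ n ∈ range (g - A), f (g - n) := by
  have hsplit : g + 1 = (A + 1) + (g - A) := by omega
  rw [hsplit, sum_range_add, ← sum_range_reflect (fun n => f (A + 1 + n))]
  congr 1
  refine sum_congr rfl fun n hn => ?_
  have := mem_range.mp hn
  congr 1
  omega

theorem sqrt_pow_mul_inv_pow_mul_cpow_pow {x : ℝ} (hx : 0 < x) {g n : ℕ} (hn : n ≤ g) (s : ℂ) :
    ((√x : ℝ) : ℂ) ^ g * ((x : ℂ) ^ n)⁻¹ * ((x : ℂ) ^ (-s)) ^ (g - n) =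
      (x : ℂ) ^ ((1 / 2 - s) * g) * (x : ℂ) ^ (-(1 - s) * n) := by
  have hx0 : (x : ℂ) ≠ 0 := Complex.ofReal_ne_zero.mpr hx.ne'
  have hsqrt : ((√x : ℝ) : ℂ) = (x : ℂ) ^ (1 / 2 : ℂ) := by
    rw [Real.sqrt_eq_rpow, Complex.ofReal_cpow hx.le]
    norm_num
  rw [hsqrt, ← Complex.cpow_nat_mul, ← Complex.cpow_natCast, ← Complex.cpow_neg,
    ← Complex.cpow_mul_nat, ← Complex.cpow_add _ _ hx0, ← Complex.cpow_add _ _ hx0,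
    ← Complex.cpow_add _ _ hx0, Nat.cast_sub hn]
  ring_nf

section Characters

variable {Fq : Type} [Field Fq] [Fintype Fq]

theorem sumMonic_conj (n : ℕ) (χ : Fq[X] → ℂ) :
    sumMonic n (fun f => starRingEnd ℂ (χ f)) = starRingEnd ℂ (sumMonic n χ) := by
  simp [sumMonic, map_sum]

theorem Lu_eq_sum_range {χ : Fq[X] → ℂ} {g : ℕ} (hχ : ∀ n, g < n → sumMonic n χ = 0) (u : ℂ) :
    Lu u χ = ∑ n ∈ range (g + 1), sumMonic n χ * u ^ n :=
  tsum_eq_sum fun n hn => by rw [hχ n (by simpa using hn), zero_mul]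

end Characters

theorem approximate_functional_equation_odd_general
    (q : ℕ) (Fq : Type) [Field Fq] [Fintype Fq]
    (hq : IsPrimePow q)
    (χ : Polynomial Fq → ℂ)
    (g : ℕ)
    (ω : ℂ)
    (hpoly : ∀ n : ℕ, g < n → sumMonic n χ = 0)
    (hFE : ∀ u : ℂ, u ≠ 0 →
      Lu u χ = ω * (((Real.sqrt q : ℝ) : ℂ) * u) ^ g *
        Lu (1 / ((q : ℂ) * u)) (fun f => (starRingEnd ℂ) (χ f))) :
    ∀ A : ℕ, A ≤ g → ∀ s : ℂ,
      Lu ((q : ℂ) ^ (-s)) χ =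
        (∑ n ∈ Finset.range (A + 1), sumMonic n χ * (q : ℂ) ^ (-s * (n : ℂ))) +
          ω * (q : ℂ) ^ ((1 / 2 - s) * (g : ℂ)) *
            ∑ n ∈ Finset.range (g - A),
              sumMonic n (fun f => (starRingEnd ℂ) (χ f)) *
                (q : ℂ) ^ (-(1 - s) * (n : ℂ)) := by
  intro A hA s
  have hq0 : (0 : ℝ) < q := by exact_mod_cast hq.pos
  have hpoly_conj : ∀ n, g < n → sumMonic n (fun f => starRingEnd ℂ (χ f)) = 0 := fun n hn => by
    rw [sumMonic_conj, hpoly n hn, map_zero]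
  have hcoeff : ∀ k ≤ g, sumMonic k χ = ω * ((√q : ℝ) : ℂ) ^ g *
      sumMonic (g - k) (fun f => starRingEnd ℂ (χ f)) * ((q : ℂ) ^ (g - k))⁻¹ :=
    fun k hk => coeff_eq_of_functional_equation (Nat.cast_ne_zero.mpr hq.ne_zero) (fun u hu => by
      have h := hFE u hu
      rwa [Lu_eq_sum_range hpoly, Lu_eq_sum_range hpoly_conj, mul_pow, ← mul_assoc] at h) hk
  rw [Lu_eq_sum_range hpoly, sum_range_succ_eq_sum_range_add_sum_range_sub _ hA, mul_sum]
  congr 1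
  · exact sum_congr rfl fun n _ => by rw [← Complex.cpow_nat_mul, mul_comm (n : ℂ)]
  refine sum_congr rfl fun n hn => ?_
  have hn : n ≤ g := by have := mem_range.mp hn; omega
  rw [hcoeff _ (Nat.sub_le g n), Nat.sub_sub_self hn]
  have hpow := sqrt_pow_mul_inv_pow_mul_cpow_pow hq0 hn s
  push_cast at hpow
  linear_combination ω * sumMonic n (fun f => starRingEnd ℂ (χ f)) * hpow

/-- **Approximate functional equation, odd case.** Here `χ` is a primitive cubic character
of modulus (conductor) `m` over `𝔽_q[T]` which is odd; its genus is `g = deg m - 2 + 1`.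
The hypotheses `hpoly`, `habs`, `hFE` record the facts (from the Weil conjectures) that
`𝓛_C(u,χ) = 𝓛(u,χ)` is a polynomial of degree `g` satisfying the functional equation
`𝓛_C(u,χ) = ω(χ)(√q u)^g 𝓛_C(1/(qu), χ̄)` with `|ω(χ)| = 1`. -/
theorem approximate_functional_equation_odd
    (q : ℕ) (Fq : Type) [Field Fq] [Fintype Fq]
    (hq : IsPrimePow q) (hq6 : q % 6 = 1) (hcard : Fintype.card Fq = q)
    (χ : Polynomial Fq → ℂ) (m : Polynomial Fq) (hm : m.Monic)
    (hmul : ∀ f h : Polynomial Fq, χ (f * h) = χ f * χ h)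
    (hcubic : ∀ f : Polynomial Fq, χ f = 0 ∨ (χ f) ^ 3 = 1)
    (hperiodic : ∀ f h : Polynomial Fq, m ∣ (f - h) → χ f = χ h)
    (hzero : ∀ f : Polynomial Fq, χ f = 0 ↔ ¬ IsCoprime f m)
    (hprimitive : ∀ d : Polynomial Fq, d.Monic → d ∣ m → d ≠ m →
      ¬ (∀ f h : Polynomial Fq, IsCoprime f m → IsCoprime h m → d ∣ (f - h) → χ f = χ h))
    (hodd : ∃ c : Fq, c ≠ 0 ∧ χ (C c) ≠ 1)
    (g : ℕ) (hgenus : m.natDegree = g + 1)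
    (ω : ℂ) (habs : ‖ω‖ = 1)
    (hpoly : ∀ n : ℕ, g < n → sumMonic n χ = 0)
    (hFE : ∀ u : ℂ, u ≠ 0 →
      Lu u χ = ω * (((Real.sqrt q : ℝ) : ℂ) * u) ^ g *
        Lu (1 / ((q : ℂ) * u)) (fun f => (starRingEnd ℂ) (χ f))) :
    ∀ A : ℕ, A ≤ g → ∀ s : ℂ,
      Lu ((q : ℂ) ^ (-s)) χ =
        (∑ n ∈ Finset.range (A + 1), sumMonic n χ * (q : ℂ) ^ (-s * (n : ℂ))) +
          ω * (q : ℂ) ^ ((1 / 2 - s) * (g : ℂ)) *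
            ∑ n ∈ Finset.range (g - A),
              sumMonic n (fun f => (starRingEnd ℂ) (χ f)) *
                (q : ℂ) ^ (-(1 - s) * (n : ℂ)) :=
  approximate_functional_equation_odd_general q Fq hq χ g ω hpoly hFE
end
end

section
/- Let q be a prime power and f a monic polynomial in 𝔽_q[T]. Then for every ε > 0 and every integer d ≥ 1, the number of squarefree monic polynomials F of degree d with gcd(F, f) = 1 equals ∏_{P | f} (1 + 1/|P|)^{−1} · |𝓗(d)| + O_ε( |f|^ε · q^{εd} ), where the product runs over monic irreducibles P dividing f and |𝓗(d)| = q^d − q^{d−1}. -/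
open Polynomial Finset Filter
open scoped Classical

noncomputable section

/-!
Write `N_S(d)` for the number of squarefree monic `F` of degree `d` divisible by no prime in a
finite set `S`, with `N_S(d) = 0` for `d < 0`. Splitting according to whether a new prime `P`
divides `F` gives `N_S(d) = N_{S ∪ {P}}(d) + N_{S ∪ {P}}(d - deg P)`, and the main term
`|𝓗(d)| ∏_{P ∈ S} (1 + 1/|P|)⁻¹` satisfies the same recursion. As `N_∅(d) = |𝓗(d)|` for `d ≥ 2`,
induction on `S` and then on `d` bounds the error by `q^{ηd} ∏_{P ∈ S} (1 - |P|^{-η})⁻¹`. A factor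
of this product is at most `|P|^{2η}` unless `|P|` lies below a bound depending only on `η`, and
only boundedly many primes do; for `S` the primes dividing `f` this gives `≪_η |f|^{2η}`.
-/

section MonicsOfDegree

variable {Fq : Type} [Field Fq]

theorem monicOf_monic (n : ℕ) (c : Fin n → Fq) : (monicOf n c).Monic :=
  monic_X_pow_add (degree_sum_fin_lt c)

theorem monicOf_natDegree (n : ℕ) (c : Fin n → Fq) : (monicOf n c).natDegree = n := by
  rw [monicOf, natDegree_add_eq_left_of_degree_lt, natDegree_X_pow]
  simpa using degree_sum_fin_lt c

theorem monicOf_coeff_of_lt (n : ℕ) (c : Fin n → Fq) {k : ℕ} (hk : k < n) :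
    (monicOf n c).coeff k = c ⟨k, hk⟩ := by
  simp only [monicOf, coeff_add, coeff_X_pow, hk.ne, if_false, zero_add, finsetSum_coeff,
    coeff_C_mul]
  rw [Fintype.sum_eq_single ⟨k, hk⟩ fun i hi => by
    rw [if_neg fun h => hi (Fin.ext h.symm), mul_zero]]
  simp

theorem monicOf_injective (n : ℕ) : Function.Injective (monicOf (Fq := Fq) n) := by
  intro c₁ c₂ h
  funext i
  simpa [monicOf_coeff_of_lt n _ i.2] using congrArg (coeff · i) h

theorem monicOf_coeff_eq {F : Fq[X]} {n : ℕ} (hF : F.Monic) (hd : F.natDegree = n) :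
    monicOf n (fun i => F.coeff i) = F := by
  ext k
  rcases lt_trichotomy k n with hk | rfl | hk
  · rw [monicOf_coeff_of_lt n _ hk]
  · have h := (monicOf_monic k fun i => F.coeff i).coeff_natDegree
    rw [monicOf_natDegree] at h
    rw [h, ← hd, hF.coeff_natDegree]
  · rw [coeff_eq_zero_of_natDegree_lt (p := F) (by omega),
      coeff_eq_zero_of_natDegree_lt (by rw [monicOf_natDegree]; omega)]

variable [Fintype Fq]

theorem one_lt_card_real : (1 : ℝ) < Fintype.card Fq := by
  exact_mod_cast Fintype.one_lt_card

variable (Fq) in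
def monicsOfDegree (n : ℕ) : Finset Fq[X] :=
  univ.image (monicOf n)

theorem mem_monicsOfDegree {F : Fq[X]} {n : ℕ} :
    F ∈ monicsOfDegree Fq n ↔ F.Monic ∧ F.natDegree = n := by
  refine ⟨?_, fun ⟨hF, hd⟩ => mem_image.mpr ⟨_, mem_univ _, monicOf_coeff_eq hF hd⟩⟩
  rintro h
  obtain ⟨c, -, rfl⟩ := mem_image.mp h
  exact ⟨monicOf_monic n c, monicOf_natDegree n c⟩

theorem card_monicsOfDegree (n : ℕ) : #(monicsOfDegree Fq n) = Fintype.card Fq ^ n := by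
  rw [monicsOfDegree, card_image_of_injective _ (monicOf_injective n)]
  simp

end MonicsOfDegree

section SquareTimesSquarefree

variable {Fq : Type} [Field Fq]

theorem exists_monic_irreducible_sq_dvd {F : Fq[X]} (hF : F ≠ 0) (h : ¬ Squarefree F) :
    ∃ P : Fq[X], P.Monic ∧ Irreducible P ∧ P ^ 2 ∣ F := by
  obtain ⟨x, hx, hxF⟩ : ∃ x : Fq[X], Irreducible x ∧ x * x ∣ F := by
    simpa using mt (squarefree_iff_irreducible_sq_not_dvd_of_ne_zero hF).mpr h
  have hassoc := normalize_associated x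
  exact ⟨normalize x, monic_normalize hx.ne_zero, hassoc.symm.irreducible hx,
    (hassoc.pow_pow (n := 2)).dvd.trans (by rwa [sq])⟩

theorem natDegree_sq_mul {A B : Fq[X]} (hA : A ≠ 0) (hB : B ≠ 0) :
    (A ^ 2 * B).natDegree = 2 * A.natDegree + B.natDegree := by
  rw [natDegree_mul (pow_ne_zero 2 hA) hB, natDegree_pow]

theorem Polynomial.Monic.exists_eq_sq_mul_squarefree {F : Fq[X]} (hF : F.Monic) :
    ∃ A B : Fq[X], A.Monic ∧ B.Monic ∧ Squarefree B ∧ F = A ^ 2 * B := by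
  induction hd : F.natDegree using Nat.strong_induction_on generalizing F with
  | _ n ih =>
  by_cases hsf : Squarefree F
  · exact ⟨1, F, monic_one, hF, hsf, by ring⟩
  obtain ⟨P, hPm, hPirr, G, rfl⟩ := exists_monic_irreducible_sq_dvd hF.ne_zero hsf
  have hG : G.Monic := (hPm.pow 2).of_mul_monic_left hF
  have hlt : G.natDegree < n := by
    have := natDegree_sq_mul hPm.ne_zero hG.ne_zero
    have := hPirr.natDegree_pos
    omega
  obtain ⟨A, B, hA, hB, hBsf, rfl⟩ := ih _ hlt hG rfl
  exact ⟨P * A, B, hPm.mul hA, hB, hBsf, by ring⟩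

open UniqueFactorizationMonoid in
theorem Polynomial.Monic.eq_and_eq_of_sq_mul_squarefree {A₁ A₂ B₁ B₂ : Fq[X]} (hA₁ : A₁.Monic)
    (hA₂ : A₂.Monic) (hB₁ : Squarefree B₁) (hB₂ : Squarefree B₂)
    (h : A₁ ^ 2 * B₁ = A₂ ^ 2 * B₂) : A₁ = A₂ ∧ B₁ = B₂ := by
  have hfac := congrArg normalizedFactors h
  rw [normalizedFactors_mul (pow_ne_zero 2 hA₁.ne_zero) hB₁.ne_zero,
    normalizedFactors_mul (pow_ne_zero 2 hA₂.ne_zero) hB₂.ne_zero,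
    normalizedFactors_pow, normalizedFactors_pow] at hfac
  -- squarefree parts contribute multiplicity at most one, so the squares are determined
  have hA : normalizedFactors A₁ = normalizedFactors A₂ := by
    ext a
    have hc := congrArg (Multiset.count a) hfac
    have h₁ := Multiset.nodup_iff_count_le_one.mp
      ((squarefree_iff_nodup_normalizedFactors hB₁.ne_zero).mp hB₁) a
    have h₂ := Multiset.nodup_iff_count_le_one.mp
      ((squarefree_iff_nodup_normalizedFactors hB₂.ne_zero).mp hB₂) a
    simp only [Multiset.count_add, Multiset.count_nsmul] at hc
    omega
  have hA₁₂ : A₁ = A₂ := eq_of_monic_of_associated hA₁ hA₂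
    ((prod_normalizedFactors hA₁.ne_zero).symm.trans (hA ▸ prod_normalizedFactors hA₂.ne_zero))
  subst hA₁₂
  exact ⟨rfl, mul_left_cancel₀ (pow_ne_zero 2 hA₁.ne_zero) h⟩

variable [Fintype Fq]

variable (Fq) in
def squarefreeMonics (n : ℕ) : Finset Fq[X] :=
  (monicsOfDegree Fq n).filter Squarefree

theorem card_monicsOfDegree_eq_sum (n : ℕ) :
    Fintype.card Fq ^ n =
      ∑ j ∈ range (n / 2 + 1), Fintype.card Fq ^ j * #(squarefreeMonics Fq (n - 2 * j)) := by
  simp only [← card_monicsOfDegree, ← card_product, ← card_sigma]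
  symm
  refine card_bij (fun x _ => x.2.1 ^ 2 * x.2.2) ?_ ?_ ?_
  · rintro ⟨j, A, B⟩ hx
    simp only [mem_sigma, mem_range, mem_product, squarefreeMonics, mem_filter,
      mem_monicsOfDegree] at hx ⊢
    obtain ⟨hj, ⟨hA, rfl⟩, ⟨hB, hBd⟩, -⟩ := hx
    refine ⟨(hA.pow 2).mul hB, ?_⟩
    rw [natDegree_sq_mul hA.ne_zero hB.ne_zero]
    omega
  · rintro ⟨j₁, A₁, B₁⟩ hx₁ ⟨j₂, A₂, B₂⟩ hx₂ h
    simp only [mem_sigma, mem_product, squarefreeMonics, mem_filter, mem_monicsOfDegree] at hx₁ hx₂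
    obtain ⟨rfl, rfl⟩ := Monic.eq_and_eq_of_sq_mul_squarefree hx₁.2.1.1 hx₂.2.1.1 hx₁.2.2.2
      hx₂.2.2.2 h
    obtain rfl : j₁ = j₂ := hx₁.2.1.2.symm.trans hx₂.2.1.2
    rfl
  · intro F hF
    rw [mem_monicsOfDegree] at hF
    obtain ⟨A, B, hA, hB, hBsf, rfl⟩ := hF.1.exists_eq_sq_mul_squarefree
    have hd := natDegree_sq_mul hA.ne_zero hB.ne_zero
    refine ⟨⟨A.natDegree, A, B⟩, ?_, rfl⟩
    simp only [mem_sigma, mem_range, mem_product, squarefreeMonics, mem_filter]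
    exact ⟨by omega, mem_monicsOfDegree.mpr ⟨hA, rfl⟩, mem_monicsOfDegree.mpr ⟨hB, by omega⟩, hBsf⟩

theorem card_squarefreeMonics_add {n : ℕ} (hn : 2 ≤ n) :
    #(squarefreeMonics Fq n) + Fintype.card Fq ^ (n - 1) = Fintype.card Fq ^ n := by
  -- peel off the `j = 0` term; the remaining terms sum to `q * q ^ (n - 2)` by the same identity
  have hsplit := card_monicsOfDegree_eq_sum (Fq := Fq) n
  rw [sum_range_succ'] at hsplit
  have hshift := card_monicsOfDegree_eq_sum (Fq := Fq) (n - 2)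
  have hrange : n / 2 = (n - 2) / 2 + 1 := by omega
  have hrest : ∑ j ∈ range (n / 2), Fintype.card Fq ^ (j + 1) *
      #(squarefreeMonics Fq (n - 2 * (j + 1))) = Fintype.card Fq ^ (n - 1) := by
    rw [hrange, show n - 1 = n - 2 + 1 by omega, pow_succ', hshift, mul_sum]
    refine sum_congr rfl fun j _ => ?_
    rw [show n - 2 * (j + 1) = n - 2 - 2 * j by omega]
    ring
  simp only [hrest, pow_zero, one_mul, mul_zero, Nat.sub_zero] at hsplit
  omega

theorem squarefreeMonics_of_le_one {n : ℕ} (hn : n ≤ 1) :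
    squarefreeMonics Fq n = monicsOfDegree Fq n := by
  refine filter_true_of_mem fun F hF => ?_
  rw [mem_monicsOfDegree] at hF
  interval_cases n
  · rw [hF.1.natDegree_eq_zero.mp hF.2]
    exact squarefree_one
  · exact (irreducible_of_degree_eq_one
      ((degree_eq_iff_natDegree_eq hF.1.ne_zero).mpr hF.2)).squarefree

theorem abs_card_squarefreeMonics_sub_le (n : ℕ) :
    |(#(squarefreeMonics Fq n) : ℝ) -
        ((Fintype.card Fq : ℝ) ^ (n : ℤ) - (Fintype.card Fq : ℝ) ^ ((n : ℤ) - 1))| ≤ 1 := by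
  rcases Nat.lt_or_ge n 2 with hn | hn
  · have hinv := inv_le_one_of_one_le₀ (one_lt_card_real (Fq := Fq)).le
    have hinv0 := inv_pos.mpr (zero_lt_one.trans (one_lt_card_real (Fq := Fq)))
    rw [squarefreeMonics_of_le_one (by omega), card_monicsOfDegree]
    interval_cases n <;> norm_num [abs_of_pos, hinv, hinv0]
  · have h := card_squarefreeMonics_add (Fq := Fq) hn
    rw [show (n : ℤ) - 1 = ((n - 1 : ℕ) : ℤ) by omega, zpow_natCast, zpow_natCast,
      ← Nat.cast_pow, ← Nat.cast_pow, ← h]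
    simp

end SquareTimesSquarefree

section Avoiding

variable {Fq : Type} [Field Fq] [Fintype Fq]

def squarefreeAvoiding (S : Finset Fq[X]) (n : ℕ) : Finset Fq[X] :=
  (squarefreeMonics Fq n).filter fun F => ∀ P ∈ S, ¬ P ∣ F

/-- Integer degrees let the recursion `avoidingCount_insert` step below degree zero. -/
def avoidingCount (S : Finset Fq[X]) (d : ℤ) : ℕ :=
  if 0 ≤ d then #(squarefreeAvoiding S d.toNat) else 0

theorem squarefreeAvoiding_empty (n : ℕ) :
    squarefreeAvoiding (∅ : Finset Fq[X]) n = squarefreeMonics Fq n :=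
  filter_true_of_mem fun _ _ _ h => (notMem_empty _ h).elim

theorem filter_not_dvd_squarefreeAvoiding (S : Finset Fq[X]) (P : Fq[X]) (n : ℕ) :
    (squarefreeAvoiding S n).filter (fun F => ¬ P ∣ F) = squarefreeAvoiding (insert P S) n := by
  ext F
  simp only [squarefreeAvoiding, mem_filter, forall_mem_insert]
  tauto

theorem filter_dvd_squarefreeAvoiding {S : Finset Fq[X]} (hS : ∀ Q ∈ S, Q.Monic ∧ Irreducible Q)
    {P : Fq[X]} (hPm : P.Monic) (hP : Irreducible P) (hPS : P ∉ S) {n : ℕ}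
    (hn : P.natDegree ≤ n) :
    (squarefreeAvoiding S n).filter (P ∣ ·) =
      (squarefreeAvoiding (insert P S) (n - P.natDegree)).image (P * ·) := by
  ext F
  simp only [squarefreeAvoiding, squarefreeMonics, mem_filter, mem_image, mem_monicsOfDegree,
    forall_mem_insert]
  constructor
  · rintro ⟨⟨⟨⟨hFm, hFd⟩, hFsf⟩, hFS⟩, G, rfl⟩
    have hGm : G.Monic := hPm.of_mul_monic_left hFm
    rw [natDegree_mul hPm.ne_zero hGm.ne_zero] at hFd
    refine ⟨G, ⟨⟨⟨hGm, by omega⟩, hFsf.of_mul_right⟩, fun hPG => ?_,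
      fun Q hQ hQG => hFS Q hQ (hQG.mul_left P)⟩, rfl⟩
    exact hP.not_isUnit (hFsf P (mul_dvd_mul_left P hPG))
  · rintro ⟨G, ⟨⟨⟨hGm, hGd⟩, hGsf⟩, hPG, hGS⟩, rfl⟩
    refine ⟨⟨⟨⟨hPm.mul hGm, ?_⟩, squarefree_mul_iff.mpr
      ⟨hP.isRelPrime_iff_not_dvd.mpr hPG, hP.squarefree, hGsf⟩⟩, fun Q hQ hQF => ?_⟩,
      dvd_mul_right P G⟩
    · rw [natDegree_mul hPm.ne_zero hGm.ne_zero]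
      omega
    obtain ⟨hQm, hQirr⟩ := hS Q hQ
    rcases hQirr.prime.dvd_or_dvd hQF with hQP | hQG
    · exact hPS (eq_of_monic_of_associated hQm hPm (hQirr.associated_of_dvd hP hQP) ▸ hQ)
    · exact hGS Q hQ hQG

theorem avoidingCount_insert {S : Finset Fq[X]} (hS : ∀ Q ∈ S, Q.Monic ∧ Irreducible Q)
    {P : Fq[X]} (hPm : P.Monic) (hP : Irreducible P) (hPS : P ∉ S) (d : ℤ) :
    avoidingCount S d =
      avoidingCount (insert P S) d + avoidingCount (insert P S) (d - P.natDegree) := by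
  have hsplit := card_filter_add_card_filter_not (s := squarefreeAvoiding S d.toNat) (P ∣ ·)
  rw [filter_not_dvd_squarefreeAvoiding] at hsplit
  unfold avoidingCount
  by_cases hd : 0 ≤ d
  · by_cases he : (P.natDegree : ℤ) ≤ d
    · rw [filter_dvd_squarefreeAvoiding hS hPm hP hPS (by omega),
        card_image_of_injective _ (mul_right_injective₀ hPm.ne_zero)] at hsplit
      rw [if_pos hd, if_pos hd, if_pos (by omega),
        show (d - P.natDegree).toNat = d.toNat - P.natDegree by omega]
      omega
    · have hempty : (squarefreeAvoiding S d.toNat).filter (P ∣ ·) = ∅ := by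
        refine filter_eq_empty_iff.mpr fun F hF hPF => he ?_
        simp only [squarefreeAvoiding, squarefreeMonics, mem_filter, mem_monicsOfDegree] at hF
        have := natDegree_le_of_dvd hPF hF.1.1.1.ne_zero
        omega
      rw [hempty, card_empty] at hsplit
      rw [if_pos hd, if_pos hd, if_neg (by omega)]
      omega
  · rw [if_neg hd, if_neg hd, if_neg (by omega)]

end Avoiding

section MainTerm

variable {Fq : Type} [Field Fq]

/-- `|𝓗(d)| ∏_{P ∈ S} (1 + 1/|P|)⁻¹` for `|P| = q ^ deg P`, in integer degree `d`. -/
def mainTerm (q : ℝ) (S : Finset Fq[X]) (d : ℤ) : ℝ :=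
  (q ^ d - q ^ (d - 1)) * ∏ P ∈ S, (1 + (q ^ P.natDegree)⁻¹)⁻¹

def errorWeight (q η : ℝ) (S : Finset Fq[X]) : ℝ :=
  ∏ P ∈ S, (1 - (q ^ P.natDegree) ^ (-η))⁻¹

variable {q η : ℝ}

theorem mainTerm_insert (hq : 0 < q) {S : Finset Fq[X]} {P : Fq[X]} (hPS : P ∉ S) (d : ℤ) :
    mainTerm q S d = mainTerm q (insert P S) d + mainTerm q (insert P S) (d - P.natDegree) := by
  have hshift : ∀ k : ℤ, q ^ (k - P.natDegree) = q ^ k / q ^ P.natDegree := fun k => by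
    rw [zpow_sub₀ hq.ne', zpow_natCast]
  simp only [mainTerm, prod_insert hPS, hshift,
    show d - P.natDegree - 1 = d - 1 - P.natDegree by ring]
  field_simp

theorem abs_mainTerm_le (hq : 1 ≤ q) (S : Finset Fq[X]) (d : ℤ) : |mainTerm q S d| ≤ q ^ d := by
  have hq0 : 0 < q := zero_lt_one.trans_le hq
  have hfactor : ∀ P ∈ S, 0 ≤ (1 + (q ^ P.natDegree)⁻¹)⁻¹ ∧ (1 + (q ^ P.natDegree)⁻¹)⁻¹ ≤ 1 :=
    fun P _ => ⟨by positivity, inv_le_one_of_one_le₀ (le_add_of_nonneg_right (by positivity))⟩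
  have hprod := prod_le_one (fun P hP => (hfactor P hP).1) (fun P hP => (hfactor P hP).2)
  have hsub : 0 ≤ q ^ d - q ^ (d - 1) := sub_nonneg.mpr (zpow_le_zpow_right₀ hq (by omega))
  have hle : q ^ d - q ^ (d - 1) ≤ q ^ d := sub_le_self _ (zpow_pos hq0 _).le
  rw [mainTerm, abs_of_nonneg (mul_nonneg hsub (prod_nonneg fun P hP => (hfactor P hP).1))]
  nlinarith

theorem one_le_inv_one_sub_rpow_neg {x : ℝ} (hx : 1 < x) (hη : 0 < η) : 1 ≤ (1 - x ^ (-η))⁻¹ :=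
  (one_le_inv₀ (sub_pos.mpr (Real.rpow_lt_one_of_one_lt_of_neg hx (neg_neg_iff_pos.mpr hη)))).mpr
    (sub_le_self _ (Real.rpow_nonneg (zero_le_one.trans hx.le) _))

theorem one_le_errorWeight (hq : 1 < q) (hη : 0 < η) {S : Finset Fq[X]}
    (hS : ∀ P ∈ S, 0 < P.natDegree) : 1 ≤ errorWeight q η S :=
  one_le_prod fun P hP => one_le_inv_one_sub_rpow_neg (one_lt_pow₀ hq (hS P hP).ne') hη

theorem errorWeight_insert_eq_add (hq : 1 < q) (hη : 0 < η) {S : Finset Fq[X]} {P : Fq[X]}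
    (hPS : P ∉ S) (hP : 0 < P.natDegree) :
    errorWeight q η (insert P S) =
      errorWeight q η S + (q ^ P.natDegree) ^ (-η) * errorWeight q η (insert P S) := by
  have ht : (q ^ P.natDegree) ^ (-η) < 1 :=
    Real.rpow_lt_one_of_one_lt_of_neg (one_lt_pow₀ hq hP.ne') (neg_neg_iff_pos.mpr hη)
  rw [errorWeight, prod_insert hPS, ← errorWeight]
  field_simp [(sub_pos.mpr ht).ne']
  ring

end MainTerm

theorem Int.induction_of_neg_of_sub {p : ℤ → Prop} {e : ℕ} (he : 0 < e) (hneg : ∀ d < 0, p d)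
    (hstep : ∀ d, 0 ≤ d → p (d - e) → p d) (d : ℤ) : p d := by
  suffices h : ∀ n : ℕ, ∀ d : ℤ, d < n → p d from h (d.toNat + 1) d (by omega)
  intro n
  induction n with
  | zero => exact fun d hd => hneg d hd
  | succ n ih =>
    intro d hd
    by_cases hdn : d < n
    · exact ih d hdn
    · exact hstep d (by omega) (ih _ (by omega))

section ErrorBound

variable {Fq : Type} [Field Fq] [Fintype Fq] {η : ℝ}

theorem avoidingCount_sub_mainTerm_insert {q : ℝ} (hq : 0 < q) {S : Finset Fq[X]}
    (hS : ∀ Q ∈ S, Q.Monic ∧ Irreducible Q) {P : Fq[X]} (hPm : P.Monic) (hP : Irreducible P)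
    (hPS : P ∉ S) (d : ℤ) :
    (avoidingCount (insert P S) d : ℝ) - mainTerm q (insert P S) d =
      ((avoidingCount S d : ℝ) - mainTerm q S d) -
        ((avoidingCount (insert P S) (d - P.natDegree) : ℝ) -
          mainTerm q (insert P S) (d - P.natDegree)) := by
  rw [avoidingCount_insert hS hPm hP hPS d, mainTerm_insert hq hPS d]
  push_cast
  ring

theorem abs_avoidingCount_sub_mainTerm_le_of_neg (hη : η ≤ 1) (S : Finset Fq[X]) {d : ℤ}
    (hd : d < 0) :
    |(avoidingCount S d : ℝ) - mainTerm (Fintype.card Fq) S d| ≤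
      (Fintype.card Fq : ℝ) ^ (η * d) := by
  have hq := one_lt_card_real (Fq := Fq)
  have hdR : (d : ℝ) < 0 := by exact_mod_cast hd
  rw [avoidingCount, if_neg (by omega), Nat.cast_zero, zero_sub, abs_neg]
  calc |mainTerm (Fintype.card Fq) S d| ≤ (Fintype.card Fq : ℝ) ^ d := abs_mainTerm_le hq.le S d
    _ = (Fintype.card Fq : ℝ) ^ (d : ℝ) := (Real.rpow_intCast _ _).symm
    _ ≤ (Fintype.card Fq : ℝ) ^ (η * d) := Real.rpow_le_rpow_of_exponent_le hq.le (by nlinarith)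

theorem abs_avoidingCount_empty_sub_mainTerm_le (hη : 0 ≤ η) (hη1 : η ≤ 1) (d : ℤ) :
    |(avoidingCount (∅ : Finset Fq[X]) d : ℝ) - mainTerm (Fintype.card Fq) (∅ : Finset Fq[X]) d| ≤
      (Fintype.card Fq : ℝ) ^ (η * d) := by
  rcases lt_or_ge d 0 with hd | hd
  · exact abs_avoidingCount_sub_mainTerm_le_of_neg hη1 ∅ hd
  obtain ⟨n, rfl⟩ := Int.eq_ofNat_of_zero_le hd
  rw [avoidingCount, if_pos hd, Int.toNat_natCast, squarefreeAvoiding_empty, mainTerm, prod_empty,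
    mul_one]
  exact (abs_card_squarefreeMonics_sub_le n).trans
    (Real.one_le_rpow one_lt_card_real.le (by positivity))

theorem abs_avoidingCount_sub_mainTerm_le (hη : 0 < η) (hη1 : η ≤ 1) {S : Finset Fq[X]}
    (hS : ∀ P ∈ S, P.Monic ∧ Irreducible P) (d : ℤ) :
    |(avoidingCount S d : ℝ) - mainTerm (Fintype.card Fq) S d| ≤
      (Fintype.card Fq : ℝ) ^ (η * d) * errorWeight (Fintype.card Fq) η S := by
  set q : ℝ := (Fintype.card Fq : ℝ)
  have hq : 1 < q := one_lt_card_real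
  induction S using Finset.induction_on generalizing d with
  | empty =>
    rw [errorWeight, prod_empty, mul_one]
    exact abs_avoidingCount_empty_sub_mainTerm_le hη.le hη1 d
  | insert P S hPS ih =>
    obtain ⟨hPm, hP⟩ := hS P (mem_insert_self P S)
    have hS' : ∀ Q ∈ S, Q.Monic ∧ Irreducible Q := fun Q hQ => hS Q (mem_insert_of_mem hQ)
    have hG := one_le_errorWeight hq hη (S := insert P S) fun Q hQ => (hS Q hQ).2.natDegree_pos
    revert d
    refine Int.induction_of_neg_of_sub hP.natDegree_pos (fun d hd => ?_) (fun d _ hprev => ?_)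
    · exact (abs_avoidingCount_sub_mainTerm_le_of_neg hη1 _ hd).trans
        (le_mul_of_one_le_right (by positivity) hG)
    have hweight :
        q ^ (η * ((d - P.natDegree : ℤ) : ℝ)) = q ^ (η * d) * (q ^ P.natDegree) ^ (-η) := by
      rw [← Real.rpow_natCast, ← Real.rpow_mul (by positivity), ← Real.rpow_add (by positivity)]
      congr 1
      push_cast
      ring
    calc |(avoidingCount (insert P S) d : ℝ) - mainTerm q (insert P S) d|
        ≤ |(avoidingCount S d : ℝ) - mainTerm q S d| +
            |(avoidingCount (insert P S) (d - P.natDegree) : ℝ) -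
              mainTerm q (insert P S) (d - P.natDegree)| := by
          rw [avoidingCount_sub_mainTerm_insert (by positivity) hS' hPm hP hPS d]
          exact abs_sub _ _
      _ ≤ q ^ (η * d) * errorWeight q η S +
            q ^ (η * ((d - P.natDegree : ℤ) : ℝ)) * errorWeight q η (insert P S) :=
          add_le_add (ih hS' d) hprev
      _ = q ^ (η * d) * (errorWeight q η S +
            (q ^ P.natDegree) ^ (-η) * errorWeight q η (insert P S)) := by
          rw [hweight]
          ring
      _ = q ^ (η * d) * errorWeight q η (insert P S) := by
          rw [← errorWeight_insert_eq_add hq hη hPS hP.natDegree_pos]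

end ErrorBound

section WeightBound

variable {η : ℝ}

theorem inv_one_sub_rpow_neg_le {x : ℝ} (hη : 0 < η) (hx : 2 ≤ x) :
    (1 - x ^ (-η))⁻¹ ≤ (1 - 2 ^ (-η))⁻¹ :=
  inv_anti₀ (sub_pos.mpr (Real.rpow_lt_one_of_one_lt_of_neg one_lt_two (neg_neg_iff_pos.mpr hη)))
    (sub_le_sub_left (Real.rpow_le_rpow_of_nonpos two_pos hx (neg_nonpos.mpr hη.le)) 1)

theorem inv_one_sub_rpow_neg_le_rpow {x : ℝ} (hη : 0 < η) (hx : 2 ^ η⁻¹ ≤ x) :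
    (1 - x ^ (-η))⁻¹ ≤ x ^ (2 * η) := by
  have hx0 : 0 < x := (Real.rpow_pos_of_pos two_pos _).trans_le hx
  set t := x ^ (-η) with ht
  have ht0 : 0 < t := Real.rpow_pos_of_pos hx0 _
  have ht2 : t ≤ 2⁻¹ := by
    calc t ≤ ((2 : ℝ) ^ η⁻¹) ^ (-η) :=
          Real.rpow_le_rpow_of_nonpos (Real.rpow_pos_of_pos two_pos _) hx (neg_nonpos.mpr hη.le)
      _ = 2⁻¹ := by rw [Real.rpow_neg (by positivity), Real.rpow_inv_rpow zero_le_two hη.ne']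
  have hpow : x ^ (2 * η) = (t ^ 2)⁻¹ := by
    rw [ht, Real.rpow_neg hx0.le, inv_pow, ← Real.rpow_natCast, ← Real.rpow_mul hx0.le]
    norm_num [mul_comm]
  rw [hpow]
  exact inv_anti₀ (by positivity) (by nlinarith)

def weightConstant (η : ℝ) : ℝ :=
  (1 - 2 ^ (-η))⁻¹ ^ (⌈(2 : ℝ) ^ η⁻¹⌉₊ ^ 2)

theorem weightConstant_pos (hη : 0 < η) : 0 < weightConstant η :=
  pow_pos (zero_lt_one.trans_le (one_le_inv_one_sub_rpow_neg one_lt_two hη)) _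

variable {Fq : Type} [Field Fq] [Fintype Fq]

theorem card_filter_pow_natDegree_lt_le (B : ℕ) {S : Finset Fq[X]} (hS : ∀ P ∈ S, P.Monic) :
    #(S.filter fun P => Fintype.card Fq ^ P.natDegree < B) ≤ B ^ 2 := by
  set E := (range B).filter fun e => Fintype.card Fq ^ e < B
  have hsub : S.filter (fun P => Fintype.card Fq ^ P.natDegree < B) ⊆
      E.biUnion (monicsOfDegree Fq) := by
    intro P hP
    obtain ⟨hPS, hPB⟩ := mem_filter.mp hP
    have hdeg : P.natDegree < B := (Nat.lt_pow_self one_lt_two).trans_le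
      (Nat.pow_le_pow_left Fintype.one_lt_card _) |>.trans hPB
    exact mem_biUnion.mpr ⟨P.natDegree, mem_filter.mpr ⟨mem_range.mpr hdeg, hPB⟩,
      mem_monicsOfDegree.mpr ⟨hS P hPS, rfl⟩⟩
  calc #(S.filter fun P => Fintype.card Fq ^ P.natDegree < B)
      ≤ ∑ e ∈ E, #(monicsOfDegree Fq e) := (card_le_card hsub).trans card_biUnion_le
    _ ≤ ∑ _e ∈ E, B :=
        sum_le_sum fun e he => (card_monicsOfDegree (Fq := Fq) e).trans_le (mem_filter.mp he).2.le
    _ ≤ B ^ 2 := by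
        rw [sum_const, smul_eq_mul, sq]
        exact Nat.mul_le_mul_right _ ((card_filter_le _ _).trans (card_range B).le)

theorem errorWeight_le (hη : 0 < η) {S : Finset Fq[X]} (hS : ∀ P ∈ S, P.Monic ∧ 0 < P.natDegree) :
    errorWeight (Fintype.card Fq) η S ≤
      weightConstant η * ((Fintype.card Fq : ℝ) ^ ∑ P ∈ S, P.natDegree) ^ (2 * η) := by
  set K : ℝ := (1 - 2 ^ (-η))⁻¹
  set B := ⌈(2 : ℝ) ^ η⁻¹⌉₊
  have hK : 1 ≤ K := one_le_inv_one_sub_rpow_neg one_lt_two hη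
  have hx2 : ∀ P ∈ S, (2 : ℝ) ≤ (Fintype.card Fq : ℝ) ^ P.natDegree := fun P hP => by
    exact_mod_cast (Nat.le_self_pow (hS P hP).2.ne' 2).trans
      (Nat.pow_le_pow_left Fintype.one_lt_card _)
  -- only the boundedly many `P` with `|P| < B` pay the constant `K`; the others pay `|P|^{2η}`
  have hfactor : ∀ P ∈ S, (1 - ((Fintype.card Fq : ℝ) ^ P.natDegree) ^ (-η))⁻¹ ≤
      (if Fintype.card Fq ^ P.natDegree < B then K else 1) *
        ((Fintype.card Fq : ℝ) ^ P.natDegree) ^ (2 * η) := by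
    intro P hP
    split_ifs with hbad
    · exact (inv_one_sub_rpow_neg_le hη (hx2 P hP)).trans (le_mul_of_one_le_right
        (zero_le_one.trans hK) (Real.one_le_rpow (one_le_two.trans (hx2 P hP)) (by positivity)))
    · rw [one_mul]
      refine inv_one_sub_rpow_neg_le_rpow hη ((Nat.le_ceil _).trans ?_)
      exact_mod_cast not_lt.mp hbad
  calc errorWeight (Fintype.card Fq) η S
      ≤ ∏ P ∈ S, (if Fintype.card Fq ^ P.natDegree < B then K else 1) *
          ((Fintype.card Fq : ℝ) ^ P.natDegree) ^ (2 * η) :=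
        prod_le_prod (fun P hP => (zero_le_one.trans
          (one_le_inv_one_sub_rpow_neg (one_lt_two.trans_le (hx2 P hP)) hη))) hfactor
    _ = K ^ #(S.filter fun P => Fintype.card Fq ^ P.natDegree < B) *
          ((Fintype.card Fq : ℝ) ^ ∑ P ∈ S, P.natDegree) ^ (2 * η) := by
        rw [prod_mul_distrib, prod_ite, prod_const, prod_const_one, mul_one,
          Real.finsetProd_rpow _ _ (fun P _ => by positivity), prod_pow_eq_pow_sum]
    _ ≤ K ^ (B ^ 2) * ((Fintype.card Fq : ℝ) ^ ∑ P ∈ S, P.natDegree) ^ (2 * η) :=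
        mul_le_mul_of_nonneg_right (pow_le_pow_right₀ hK
          (card_filter_pow_natDegree_lt_le B fun P hP => (hS P hP).1)) (by positivity)

end WeightBound

section PrimeFactors

open UniqueFactorizationMonoid

variable {Fq : Type} [Field Fq]

theorem mem_primeFactors_iff_monic_irreducible_dvd {f P : Fq[X]} (hf : f ≠ 0) :
    P ∈ primeFactors f ↔ P.Monic ∧ Irreducible P ∧ P ∣ f := by
  rw [mem_primeFactors, Polynomial.mem_normalizedFactors_iff hf]
  tauto

theorem isCoprime_iff_forall_mem_primeFactors_not_dvd {f F : Fq[X]} (hf : f ≠ 0) :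
    IsCoprime F f ↔ ∀ P ∈ primeFactors f, ¬ P ∣ F := by
  refine ⟨fun h P hP hPF => ?_, fun h => isCoprime_of_irreducible_dvd (fun h0 => hf h0.2) ?_⟩
  · obtain ⟨-, hP, hPf⟩ := (mem_primeFactors_iff_monic_irreducible_dvd hf).mp hP
    exact hP.not_isUnit (h.isUnit_of_dvd' hPF hPf)
  · intro z hz hzF hzf
    have hassoc := normalize_associated z
    exact h (normalize z) ((mem_primeFactors_iff_monic_irreducible_dvd hf).mpr
      ⟨monic_normalize hz.ne_zero, hassoc.symm.irreducible hz, hassoc.dvd.trans hzf⟩)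
      (hassoc.dvd.trans hzF)

theorem sum_natDegree_primeFactors_le {f : Fq[X]} (hf : f ≠ 0) :
    ∑ P ∈ primeFactors f, P.natDegree ≤ f.natDegree := by
  have h := natDegree_le_of_dvd (radical_dvd_self (a := f)) hf
  rw [radical, natDegree_prod _ id fun P hP =>
    ((mem_primeFactors_iff_monic_irreducible_dvd hf).mp hP).2.1.ne_zero] at h
  exact h

theorem tprod_subtype_monic_irreducible_dvd {f : Fq[X]} (hf : f ≠ 0) (g : Fq[X] → ℝ) :
    ∏' P : {P : Fq[X] // P.Monic ∧ Irreducible P ∧ P ∣ f}, g P = ∏ P ∈ primeFactors f, g P := by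
  rw [← Finset.tprod_subtype]
  exact (Equiv.subtypeEquivRight fun P =>
    (mem_primeFactors_iff_monic_irreducible_dvd hf).symm).tprod_eq (fun P => g P.1)

theorem tprod_mul_eq_mainTerm {f : Fq[X]} (hf : f ≠ 0) (q : ℝ) {d : ℕ} (hd : 1 ≤ d) :
    (∏' P : {P : Fq[X] // P.Monic ∧ Irreducible P ∧ P ∣ f}, (1 + (q ^ P.1.natDegree)⁻¹)⁻¹) *
        (q ^ d - q ^ (d - 1)) = mainTerm q (primeFactors f) d := by
  rw [tprod_subtype_monic_irreducible_dvd hf fun P => (1 + (q ^ P.natDegree)⁻¹)⁻¹, mainTerm,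
    mul_comm, show (d : ℤ) - 1 = ((d - 1 : ℕ) : ℤ) by omega, zpow_natCast, zpow_natCast]

variable [Fintype Fq]

theorem card_filter_squarefree_isCoprime_eq {f : Fq[X]} (hf : f ≠ 0) (d : ℕ) :
    #((univ : Finset (Fin d → Fq)).filter
        fun c => Squarefree (monicOf d c) ∧ IsCoprime (monicOf d c) f) =
      avoidingCount (primeFactors f) d := by
  rw [avoidingCount, if_pos (Int.natCast_nonneg d), Int.toNat_natCast, squarefreeAvoiding,
    squarefreeMonics, monicsOfDegree, filter_filter, filter_image,
    card_image_of_injective _ (monicOf_injective d)]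
  simp only [isCoprime_iff_forall_mem_primeFactors_not_dvd hf]

theorem abs_avoidingCount_primeFactors_sub_mainTerm_le {η : ℝ} (hη : 0 < η) (hη1 : η ≤ 1)
    {f : Fq[X]} (hf : f ≠ 0) (d : ℤ) :
    |(avoidingCount (primeFactors f) d : ℝ) - mainTerm (Fintype.card Fq) (primeFactors f) d| ≤
      weightConstant η * (Fintype.card Fq : ℝ) ^ (2 * η * f.natDegree) *
        (Fintype.card Fq : ℝ) ^ (η * d) := by
  have hS := fun P hP => (mem_primeFactors_iff_monic_irreducible_dvd (P := P) hf).mp hP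
  have hq : (1 : ℝ) < Fintype.card Fq := one_lt_card_real
  have hdeg : (∑ P ∈ primeFactors f, P.natDegree : ℝ) ≤ f.natDegree := by
    exact_mod_cast sum_natDegree_primeFactors_le hf
  have hweight : errorWeight (Fintype.card Fq) η (primeFactors f) ≤
      weightConstant η * (Fintype.card Fq : ℝ) ^ (2 * η * f.natDegree) := by
    refine (errorWeight_le hη fun P hP => ⟨(hS P hP).1, (hS P hP).2.1.natDegree_pos⟩).trans ?_
    rw [← Real.rpow_natCast_mul (by positivity)]
    exact mul_le_mul_of_nonneg_left
      (Real.rpow_le_rpow_of_exponent_le hq.le (by push_cast; nlinarith)) (weightConstant_pos hη).le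
  calc _ ≤ (Fintype.card Fq : ℝ) ^ (η * d) * errorWeight (Fintype.card Fq) η (primeFactors f) :=
        abs_avoidingCount_sub_mainTerm_le hη hη1 (fun P hP => ⟨(hS P hP).1, (hS P hP).2.1⟩) d
    _ ≤ _ := by
        rw [mul_comm]
        exact mul_le_mul_of_nonneg_right hweight (by positivity)

end PrimeFactors

/-- **Equation (3.4).** The number of squarefree monic `F` of degree `d ≥ 1` coprime to a
fixed monic `f` is `∏_{P | f} (1 + 1/|P|)⁻¹ · |𝓗(d)| + O_ε(|f|^ε q^{εd})`, where
`|𝓗(d)| = q^d - q^{d-1}`, with implied constant depending only on `ε`. -/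
theorem count_squarefree_coprime (ε : ℝ) (hε : 0 < ε) :
    ∃ C : ℝ, 0 < C ∧
      ∀ (q : ℕ) (Fq : Type) [Field Fq] [Fintype Fq],
        IsPrimePow q → Fintype.card Fq = q →
        ∀ f : Polynomial Fq, f.Monic →
          ∀ d : ℕ, 1 ≤ d →
            |((((Finset.univ : Finset (Fin d → Fq)).filter
                  (fun c => Squarefree (monicOf d c) ∧ IsCoprime (monicOf d c) f)).card : ℝ) -
                (∏' P : {P : Polynomial Fq // P.Monic ∧ Irreducible P ∧ P ∣ f},
                    (1 + ((q : ℝ) ^ P.1.natDegree)⁻¹)⁻¹) *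
                  ((q : ℝ) ^ d - (q : ℝ) ^ (d - 1)))| ≤
              C * (q : ℝ) ^ (ε * (f.natDegree : ℝ)) * (q : ℝ) ^ (ε * (d : ℝ)) := by
  obtain ⟨η, hη, hη1, hηε⟩ : ∃ η : ℝ, 0 < η ∧ η ≤ 1 ∧ 2 * η ≤ ε :=
    ⟨min ε 1 / 2, by positivity, by linarith [min_le_right ε 1], by linarith [min_le_left ε 1]⟩
  refine ⟨weightConstant η, weightConstant_pos hη, ?_⟩
  rintro q Fq _ _ - rfl f hf d hd
  rw [card_filter_squarefree_isCoprime_eq hf.ne_zero, tprod_mul_eq_mainTerm hf.ne_zero _ hd]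
  refine (abs_avoidingCount_primeFactors_sub_mainTerm_le hη hη1 hf.ne_zero d).trans ?_
  have hq : (1 : ℝ) ≤ Fintype.card Fq := one_lt_card_real.le
  have hfε : 2 * η * f.natDegree ≤ ε * f.natDegree :=
    mul_le_mul_of_nonneg_right hηε (Nat.cast_nonneg _)
  have hdε : η * ((d : ℤ) : ℝ) ≤ ε * d := by
    rw [Int.cast_natCast]
    exact mul_le_mul_of_nonneg_right (by linarith) (Nat.cast_nonneg _)
  have hC := (weightConstant_pos hη).le
  exact mul_le_mul (mul_le_mul_of_nonneg_left (Real.rpow_le_rpow_of_exponent_le hq hfε) hC)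
    (Real.rpow_le_rpow_of_exponent_le hq hdε) (by positivity) (mul_nonneg hC (by positivity))
end
end
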